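/- For all m ≤ n in ℕ and every x ∈ 𝕊, F_{m,n}(F_{n+1}(x)) = F_m(x). -/

import Mathlib

noncomputable section

instance : Fact ((0 : ℝ) < 1) := ⟨one_pos⟩

/-- The closed dyadic arc of level `n` and index `j` in the circle `𝕊 = [0,1]/{0,1}`,
realized as `AddCircle (1 : ℝ)`: the image of `[j/2^n, (j+1)/2^n]`. -/
def dyadicArc (n j : ℕ) : Set (AddCircle (1 : ℝ)) :=
  (fun r : ℝ => (r : AddCircle (1 : ℝ))) '' Set.Icc ((j : ℝ) / 2 ^ n) (((j : ℝ) + 1) / 2 ^ n)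

/-- The left endpoint of the dyadic arc of level `n` and index `j`. -/
def leftPt (n j : ℕ) : AddCircle (1 : ℝ) := (((j : ℝ) / 2 ^ n : ℝ) : AddCircle (1 : ℝ))

/-- The right endpoint of the dyadic arc of level `n` and index `j`. -/
def rightPt (n j : ℕ) : AddCircle (1 : ℝ) := ((((j : ℝ) + 1) / 2 ^ n : ℝ) : AddCircle (1 : ℝ))

/-- `Δ` (given as a function of the level `n` and the index `j < 2^n` of a dyadic arc) is a
dyadic diameter function of type `𝒮₁`: `Δ(𝕊) = 1`, `Δ` is positive, the two children of any
dyadic arc have equal `Δ`-value, which is either half of or equal to that of their parent,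
and `max {Δ(I) : I ∈ ℐ_n} → 0` as `n → ∞`. -/
def IsS1 (Δ : ℕ → ℕ → ℝ) : Prop :=
  Δ 0 0 = 1 ∧
  (∀ n j : ℕ, j < 2 ^ n → 0 < Δ n j) ∧
  (∀ n j : ℕ, j < 2 ^ n → Δ (n + 1) (2 * j) = Δ (n + 1) (2 * j + 1) ∧
    (Δ (n + 1) (2 * j) = Δ n j / 2 ∨ Δ (n + 1) (2 * j) = Δ n j)) ∧
  (∀ ε : ℝ, 0 < ε → ∃ N : ℕ, ∀ n ≥ N, ∀ j < 2 ^ n, Δ n j < ε)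

/-- `c` is a chain of dyadic arcs (given by level-index pairs) joining `x` to `y`:
all indices are valid, the union of the arcs is connected, and it contains `x` and `y`. -/
def IsDyadicChain (N : ℕ) (c : Fin (N + 1) → ℕ × ℕ) (x y : AddCircle (1 : ℝ)) : Prop :=
  (∀ k, (c k).2 < 2 ^ (c k).1) ∧
  IsConnected (⋃ k, dyadicArc (c k).1 (c k).2) ∧
  x ∈ ⋃ k, dyadicArc (c k).1 (c k).2 ∧ y ∈ ⋃ k, dyadicArc (c k).1 (c k).2

/-- The set of sums `Σ Δ'(J_k)` over all chains of dyadic arcs joining `x` and `y`. -/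
def chainSums (Δ' : ℕ → ℕ → ℝ) (x y : AddCircle (1 : ℝ)) : Set ℝ :=
  {s | ∃ (N : ℕ) (c : Fin (N + 1) → ℕ × ℕ), IsDyadicChain N c x y ∧
    s = ∑ k, Δ' (c k).1 (c k).2}

/-- The distance associated to a weight `Δ'` on dyadic arcs:
`d(x,y) = inf Σ Δ'(J_k)` over all chains of dyadic arcs joining `x` and `y`. -/
def dOf (Δ' : ℕ → ℕ → ℝ) (x y : AddCircle (1 : ℝ)) : ℝ := sInf (chainSums Δ' x y)

/-- The truncation `Δ_n` of `Δ`: `Δ_n(I) = Δ(I)` for arcs of level `≤ n`, and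
`Δ_n(I) = ½ Δ_n(parent of I)` for arcs of level `> n`. -/
def trunc (Δ : ℕ → ℕ → ℝ) (n : ℕ) : ℕ → ℕ → ℝ := fun m j =>
  if m ≤ n then Δ m j else Δ n (j / 2 ^ (m - n)) / 2 ^ (m - n)

/-- A chain of dyadic arcs is minimal if the arcs have pairwise disjoint interiors and no
union of at least two distinct arcs from the chain equals a dyadic arc. -/
def IsMinimalChain (N : ℕ) (c : Fin (N + 1) → ℕ × ℕ) : Prop :=
  (∀ k l : Fin (N + 1), k ≠ l →
    interior (dyadicArc (c k).1 (c k).2) ∩ interior (dyadicArc (c l).1 (c l).2) = ∅) ∧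
  (∀ T : Finset (Fin (N + 1)), 2 ≤ T.card →
    ¬∃ m j : ℕ, j < 2 ^ m ∧ (⋃ k ∈ T, dyadicArc (c k).1 (c k).2) = dyadicArc m j)

/-- The piecewise-linear folding of `[0,1]`: it maps `[0,1/4]` onto `[0,1/2]`,
`[1/4,3/8]` onto `[1/2,3/4]`, `[3/8,1/2]` onto `[1/2,3/4]` reversing orientation,
`[1/2,5/8]` onto `[1/4,1/2]` reversing orientation, `[5/8,3/4]` onto `[1/4,1/2]`,
and `[3/4,1]` onto `[1/2,1]`, each piece linearly. -/
def foldPhi (t : ℝ) : ℝ :=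
  if t ≤ 3 / 8 then 2 * t else if t ≤ 5 / 8 then 3 / 2 - 2 * t else 2 * t - 1

/-- The canonical representative in `[0,1)` of a point of the circle. -/
def circRep (x : AddCircle (1 : ℝ)) : ℝ := ((AddCircle.equivIco 1 0) x).1

/-- The map `f_n : 𝕊 → 𝕊`: on each dyadic arc `I` of level `n`, it is the identity if the
children of `I` have `Δ`-value half that of `I`, and the folding map of `I` if the children
have `Δ`-value equal to that of `I`. -/
def foldMap (Δ : ℕ → ℕ → ℝ) (n : ℕ) (x : AddCircle (1 : ℝ)) : AddCircle (1 : ℝ) :=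
  let t : ℝ := circRep x
  let j : ℕ := ⌊t * 2 ^ n⌋₊
  if Δ (n + 1) (2 * j) = Δ n j then
    (((((j : ℝ) + foldPhi (t * 2 ^ n - (j : ℝ))) / 2 ^ n) : ℝ) : AddCircle (1 : ℝ))
  else x

/-- The composition `F_{m,n} = f_m ∘ f_{m+1} ∘ ⋯ ∘ f_n` (the identity if `n < m`). -/
def Fchain (Δ : ℕ → ℕ → ℝ) (m : ℕ) : ℕ → AddCircle (1 : ℝ) → AddCircle (1 : ℝ)
  | 0 => if m = 0 then foldMap Δ 0 else id
  | n + 1 => if m ≤ n then Fchain Δ m n ∘ foldMap Δ (n + 1)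
      else if m = n + 1 then foldMap Δ (n + 1) else id

/-- The set `𝒟_k` of dyadic points of level `k` in the circle. -/
def Dpts (k : ℕ) : Set (AddCircle (1 : ℝ)) :=
  {x | ∃ j : ℕ, x = (((j : ℝ) / 2 ^ k : ℝ) : AddCircle (1 : ℝ))}

/-- The set `𝒟 = ⋃ k, 𝒟_k` of all dyadic points of the circle. -/
def DptsAll : Set (AddCircle (1 : ℝ)) := ⋃ k, Dpts k

/-- `F` is the map `F_m : Γ → Γ_m`: it is `1`-Lipschitz from `d_Δ` to `d_m` and agrees on
dyadic points with the (eventually stable) limit of the maps `F_{m,n}` as `n → ∞`. -/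
def IsLimitMap (Δ : ℕ → ℕ → ℝ) (m : ℕ) (F : AddCircle (1 : ℝ) → AddCircle (1 : ℝ)) : Prop :=
  (∀ x y : AddCircle (1 : ℝ), dOf (trunc Δ m) (F x) (F y) ≤ dOf Δ x y) ∧
  (∀ x ∈ DptsAll, ∃ N : ℕ, ∀ n ≥ N, Fchain Δ m n x = F x)

/-- A subset `U` of a space with a distance function `d` is `δ`-connected if every pair of
points of `U` is joined by a finite sequence of points of `U` with consecutive
distances at most `δ`. -/
def DConn {α : Type*} (d : α → α → ℝ) (δ : ℝ) (U : Set α) : Prop :=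
  ∀ x ∈ U, ∀ y ∈ U, ∃ (N : ℕ) (c : Fin (N + 1) → α),
    (∀ i, c i ∈ U) ∧ c 0 = x ∧ c (Fin.last N) = y ∧
      ∀ i : Fin N, d (c i.castSucc) (c i.succ) ≤ δ

/-- `U` is a `δ`-component of `S`: a maximal `δ`-connected subset of `S`. -/
def DComp {α : Type*} (d : α → α → ℝ) (δ : ℝ) (S U : Set α) : Prop :=
  U ⊆ S ∧ DConn d δ U ∧ ∀ V : Set α, U ⊆ V → V ⊆ S → DConn d δ V → V = U

/-- The diameter of a set with respect to a distance function `d`. -/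
def ddiam {α : Type*} (d : α → α → ℝ) (S : Set α) : ℝ :=
  sSup {r | ∃ x ∈ S, ∃ y ∈ S, r = d x y}

/-!
On dyadic points the identity is the composition law `F_{m,n'} = F_{m,n} ∘ F_{n+1,n'}` for
`n < n'`, since both limit maps are eventually given by these compositions there. A general
point `x` is the `d_Δ`-limit of the left endpoints of the level-`N` arcs containing it (one arc
is a chain, and `Δ` of level-`N` arcs tends to `0`). Both limit maps are continuous along such
sequences, because `Δ_m ≥ 2⁻ᵏ` on arcs of level `k` makes `d_m` dominate the metric of the
circle, and `F_{m,n}` is continuous as a composition of folding maps, which glue continuously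
at the dyadic points since the folding fixes the endpoints of each arc.
-/

open Set Filter Topology

section ConnectedUnion

variable {α ι : Type*} [PseudoMetricSpace α] {S : ι → Set α} {r : ι → ℝ}

lemma dist_le_sum_support_of_walk (hr : ∀ i, ∀ p ∈ S i, ∀ q ∈ S i, dist p q ≤ r i)
    {G : SimpleGraph ι} (hG : ∀ a b, G.Adj a b → (S a ∩ S b).Nonempty) {a b : ι}
    (W : G.Walk a b) {p q : α} (hp : p ∈ S a) (hq : q ∈ S b) :
    dist p q ≤ (W.support.map r).sum := by
  induction W generalizing p with
  | nil => simpa using hr _ p hp q hq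
  | cons hadj W ih =>
    obtain ⟨s, hs, hs'⟩ := hG _ _ hadj
    simp only [SimpleGraph.Walk.support_cons, List.map_cons, List.sum_cons]
    exact (dist_triangle p s q).trans (add_le_add (hr _ p hp s hs) (ih hs' hq))

lemma dist_le_sum_of_isPreconnected_iUnion [Fintype ι] (hS : ∀ i, IsClosed (S i))
    (hr0 : ∀ i, 0 ≤ r i) (hr : ∀ i, ∀ p ∈ S i, ∀ q ∈ S i, dist p q ≤ r i)
    (hconn : IsPreconnected (⋃ i, S i)) {z w : α} (hz : z ∈ ⋃ i, S i)
    (hw : w ∈ ⋃ i, S i) : dist z w ≤ ∑ i, r i := by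
  classical
  obtain ⟨a, hza⟩ := mem_iUnion.1 hz
  obtain ⟨b, hwb⟩ := mem_iUnion.1 hw
  let G := SimpleGraph.fromRel fun i j => (S i ∩ S j).Nonempty
  have hG : ∀ i j, G.Adj i j → (S i ∩ S j).Nonempty := by
    rintro i j ⟨-, h | ⟨p, hpj, hpi⟩⟩
    exacts [h, ⟨p, hpi, hpj⟩]
  -- the sets reachable from `a` and the others are closed and cover the union, so they meet
  have hreach : G.Reachable a b := by
    by_contra hab
    obtain ⟨p, -, hpA, hpB⟩ := isPreconnected_closed_iff.1 hconn
      (⋃ (i) (_ : G.Reachable a i), S i) (⋃ (i) (_ : ¬G.Reachable a i), S i)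
      (isClosed_iUnion_of_finite fun i => isClosed_iUnion_of_finite fun _ => hS i)
      (isClosed_iUnion_of_finite fun i => isClosed_iUnion_of_finite fun _ => hS i)
      (fun p hp => by
        obtain ⟨i, hpi⟩ := mem_iUnion.1 hp
        by_cases hi : G.Reachable a i
        exacts [Or.inl (mem_biUnion hi hpi), Or.inr (mem_biUnion hi hpi)])
      ⟨z, hz, mem_biUnion (SimpleGraph.Reachable.refl a) hza⟩ ⟨w, hw, mem_biUnion hab hwb⟩
    obtain ⟨i, hi, hpi⟩ := mem_iUnion₂.1 hpA
    obtain ⟨j, hj, hpj⟩ := mem_iUnion₂.1 hpB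
    rcases eq_or_ne i j with rfl | hne
    · exact hj hi
    · exact hj (hi.trans (SimpleGraph.fromRel_adj _ i j |>.2 ⟨hne, .inl ⟨p, hpi, hpj⟩⟩).reachable)
  obtain ⟨W⟩ := hreach
  let P := W.toPath
  calc dist z w ≤ ((P : G.Walk a b).support.map r).sum :=
        dist_le_sum_support_of_walk hr hG _ hza hwb
    _ = ∑ i ∈ (P : G.Walk a b).support.toFinset, r i :=
        (List.sum_toFinset _ P.2.support_nodup).symm
    _ ≤ ∑ i, r i := Finset.sum_le_sum_of_subset_of_nonneg (Finset.subset_univ _) fun i _ _ => hr0 i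

end ConnectedUnion

lemma continuous_floor_fract {γ : Type*} [TopologicalSpace γ] {H : ℤ → ℝ → γ}
    (hH : ∀ z, ContinuousOn (H z) (Icc 0 1)) (hglue : ∀ z : ℤ, H z 1 = H (z + 1) 0) :
    Continuous fun v => H ⌊v⌋ (Int.fract v) := by
  have hpiece : ∀ z : ℤ, ContinuousOn (fun v => H ⌊v⌋ (Int.fract v)) (Icc z (z + 1)) := by
    intro z
    refine ((hH z).comp (f := fun v : ℝ => v - z) (s := Icc (z : ℝ) (z + 1)) (by fun_prop)
      fun v hv => ⟨sub_nonneg.2 hv.1, by linarith [hv.2]⟩).congr fun v hv => ?_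
    rcases hv.2.eq_or_lt with rfl | hlt
    · have h : ((z : ℝ) + 1) = ((z + 1 : ℤ) : ℝ) := by push_cast; ring
      rw [h, Int.floor_intCast, Int.fract_intCast, ← hglue, ← h]
      simp
    · have hfl : ⌊v⌋ = z := Int.floor_eq_iff.2 ⟨hv.1, hlt⟩
      simp [Int.fract, hfl]
  refine continuous_iff_continuousAt.2 fun v => ?_
  have hcover : Icc ((⌊v⌋ - 1 : ℤ) : ℝ) ((⌊v⌋ - 1 : ℤ) + 1) ∪ Icc (⌊v⌋ : ℝ) (⌊v⌋ + 1) =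
      Icc ((⌊v⌋ : ℝ) - 1) (⌊v⌋ + 1) := by
    push_cast
    rw [sub_add_cancel, Icc_union_Icc_eq_Icc (by linarith) (by linarith)]
  have hon := (hpiece (⌊v⌋ - 1)).union_of_isClosed (hpiece ⌊v⌋) isClosed_Icc isClosed_Icc
  rw [hcover] at hon
  exact hon.continuousAt (Icc_mem_nhds (by linarith [Int.floor_le v]) (Int.lt_floor_add_one v))

local notation "𝕊" => AddCircle (1 : ℝ)

lemma circRep_coe (t : ℝ) : circRep t = Int.fract t := by
  simp [circRep]

lemma coe_circRep (x : 𝕊) : (circRep x : 𝕊) = x :=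
  (AddCircle.equivIco 1 0).symm_apply_apply x

lemma dist_coe_le_abs_sub (a b : ℝ) : dist (a : 𝕊) (b : 𝕊) ≤ |a - b| := by
  rw [dist_eq_norm, ← AddCircle.coe_sub, AddCircle.norm_eq]
  simpa using round_le (a - b) 0

lemma isClosed_dyadicArc (n j : ℕ) : IsClosed (dyadicArc n j) :=
  (isCompact_Icc.image (AddCircle.continuous_mk' 1)).isClosed

lemma isConnected_dyadicArc (n j : ℕ) : IsConnected (dyadicArc n j) :=
  (isConnected_Icc (by gcongr; linarith)).image _ (AddCircle.continuous_mk' 1).continuousOn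

lemma dist_le_of_mem_dyadicArc {n j : ℕ} {p q : 𝕊} (hp : p ∈ dyadicArc n j)
    (hq : q ∈ dyadicArc n j) : dist p q ≤ (1 / 2) ^ n := by
  obtain ⟨a, ⟨ha, ha'⟩, rfl⟩ := hp
  obtain ⟨b, ⟨hb, hb'⟩, rfl⟩ := hq
  have hwidth : ((j : ℝ) + 1) / 2 ^ n - j / 2 ^ n = (1 / 2) ^ n := by
    rw [div_pow, one_pow]; ring
  exact (dist_coe_le_abs_sub a b).trans (abs_sub_le_iff.2 ⟨by linarith, by linarith⟩)

lemma dyadicArc_zero_zero : dyadicArc 0 0 = univ :=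
  eq_univ_of_forall fun x => ⟨circRep x, by
    simpa [circRep] using Ico_subset_Icc_self ((AddCircle.equivIco 1 0) x).2, coe_circRep x⟩

lemma mem_dyadicArc_floor (n : ℕ) (x : 𝕊) :
    ⌊circRep x * 2 ^ n⌋₊ < 2 ^ n ∧ x ∈ dyadicArc n ⌊circRep x * 2 ^ n⌋₊ ∧
      leftPt n ⌊circRep x * 2 ^ n⌋₊ ∈ dyadicArc n ⌊circRep x * 2 ^ n⌋₊ := by
  obtain ⟨t, rfl⟩ := QuotientAddGroup.mk_surjective x
  rw [circRep_coe]
  have h2n : (0 : ℝ) < 2 ^ n := by positivity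
  have hv : 0 ≤ Int.fract t * 2 ^ n := by positivity
  have hlo := Nat.floor_le hv
  have hhi := Nat.lt_floor_add_one (Int.fract t * 2 ^ n)
  refine ⟨?_, ⟨Int.fract t, ⟨?_, ?_⟩, ?_⟩, ⟨_, ⟨le_rfl, by gcongr; linarith⟩, rfl⟩⟩
  · exact (Nat.floor_lt hv).2 (by push_cast; nlinarith [Int.fract_lt_one t])
  · rwa [div_le_iff₀ h2n]
  · rw [le_div_iff₀ h2n]; linarith
  · rw [← circRep_coe]; exact coe_circRep _

section ChainDistance

variable {Δ' : ℕ → ℕ → ℝ}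

lemma isDyadicChain_singleton {n j : ℕ} (hj : j < 2 ^ n) {x y : 𝕊} (hx : x ∈ dyadicArc n j)
    (hy : y ∈ dyadicArc n j) : IsDyadicChain 0 (fun _ => (n, j)) x y := by
  refine ⟨fun _ => hj, ?_, ?_, ?_⟩ <;> simp only [iUnion_const]
  exacts [isConnected_dyadicArc n j, hx, hy]

lemma chainSums_nonempty (Δ' : ℕ → ℕ → ℝ) (x y : 𝕊) : (chainSums Δ' x y).Nonempty :=
  ⟨_, 0, _, isDyadicChain_singleton (n := 0) (j := 0) one_pos
    (dyadicArc_zero_zero ▸ mem_univ x) (dyadicArc_zero_zero ▸ mem_univ y), rfl⟩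

lemma dOf_nonneg (h0 : ∀ k j, j < 2 ^ k → 0 ≤ Δ' k j) (x y : 𝕊) : 0 ≤ dOf Δ' x y := by
  refine Real.sInf_nonneg ?_
  rintro s ⟨N, c, hc, rfl⟩
  exact Finset.sum_nonneg fun k _ => h0 _ _ (hc.1 k)

lemma dOf_le_of_mem_dyadicArc (h0 : ∀ k j, j < 2 ^ k → 0 ≤ Δ' k j) {n j : ℕ} (hj : j < 2 ^ n)
    {x y : 𝕊} (hx : x ∈ dyadicArc n j) (hy : y ∈ dyadicArc n j) : dOf Δ' x y ≤ Δ' n j := by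
  refine csInf_le ⟨0, ?_⟩ ⟨0, _, isDyadicChain_singleton hj hx hy, by simp⟩
  rintro s ⟨N, c, hc, rfl⟩
  exact Finset.sum_nonneg fun k _ => h0 _ _ (hc.1 k)

lemma dist_le_dOf (h : ∀ k j, j < 2 ^ k → (1 / 2 : ℝ) ^ k ≤ Δ' k j) (x y : 𝕊) :
    dist x y ≤ dOf Δ' x y := by
  refine le_csInf (chainSums_nonempty Δ' x y) ?_
  rintro s ⟨N, c, ⟨hc, hconn, hx, hy⟩, rfl⟩
  exact dist_le_sum_of_isPreconnected_iUnion (fun k => isClosed_dyadicArc _ _)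
    (fun k => (pow_nonneg (by norm_num) _).trans (h _ _ (hc k)))
    (fun k p hp q hq => (dist_le_of_mem_dyadicArc hp hq).trans (h _ _ (hc k)))
    hconn.isPreconnected hx hy

end ChainDistance

namespace IsS1

variable {Δ : ℕ → ℕ → ℝ}

lemma half_pow_le (hΔ : IsS1 Δ) {k j : ℕ} (hj : j < 2 ^ k) : (1 / 2 : ℝ) ^ k ≤ Δ k j := by
  induction k generalizing j with
  | zero =>
    obtain rfl : j = 0 := by simpa using hj
    simp [hΔ.1]
  | succ k ih =>
    have hp : j / 2 < 2 ^ k := by rw [pow_succ] at hj; omega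
    obtain ⟨hsib, hchild⟩ := hΔ.2.2.1 k (j / 2) hp
    have hhalf : Δ k (j / 2) / 2 ≤ Δ (k + 1) (2 * (j / 2)) := by
      rcases hchild with h | h <;> rw [h]
      linarith [hΔ.2.1 k _ hp]
    have hj' : Δ (k + 1) j = Δ (k + 1) (2 * (j / 2)) := by
      rcases Nat.mod_two_eq_zero_or_one j with h | h
      · rw [show 2 * (j / 2) = j by omega]
      · rw [hsib, show 2 * (j / 2) + 1 = j by omega]
    rw [hj', pow_succ]
    linarith [ih hp]

lemma half_pow_le_trunc (hΔ : IsS1 Δ) (M : ℕ) {k j : ℕ} (hj : j < 2 ^ k) :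
    (1 / 2 : ℝ) ^ k ≤ trunc Δ M k j := by
  unfold trunc
  split_ifs with hk
  · exact hΔ.half_pow_le hj
  · have hsplit : 2 ^ k = 2 ^ (k - M) * 2 ^ M := by rw [← pow_add]; congr 1; omega
    have hp : j / 2 ^ (k - M) < 2 ^ M := Nat.div_lt_of_lt_mul (hsplit ▸ hj)
    calc (1 / 2 : ℝ) ^ k = (1 / 2) ^ M / 2 ^ (k - M) := by
          rw [div_pow 1 2 M, one_pow, div_div, ← pow_add, ← one_div_pow]; congr 1; omega
      _ ≤ Δ M (j / 2 ^ (k - M)) / 2 ^ (k - M) := by gcongr; exact hΔ.half_pow_le hp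

end IsS1

section LimitMap

variable {Δ : ℕ → ℕ → ℝ}

lemma IsLimitMap.tendsto_comp (hΔ : IsS1 Δ) {M : ℕ} {F : 𝕊 → 𝕊} (hF : IsLimitMap Δ M F)
    {x : 𝕊} {y : ℕ → 𝕊} (hy : Tendsto (fun N => dOf Δ x (y N)) atTop (𝓝 0)) :
    Tendsto (fun N => F (y N)) atTop (𝓝 (F x)) := by
  refine tendsto_iff_dist_tendsto_zero.2 (squeeze_zero (fun _ => dist_nonneg) (fun N => ?_) hy)
  calc dist (F (y N)) (F x) = dist (F x) (F (y N)) := dist_comm _ _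
    _ ≤ dOf (trunc Δ M) (F x) (F (y N)) :=
        dist_le_dOf (fun _ _ hj => hΔ.half_pow_le_trunc M hj) _ _
    _ ≤ dOf Δ x (y N) := hF.1 x (y N)

lemma exists_seq_mem_DptsAll_tendsto_dOf (hΔ : IsS1 Δ) (x : 𝕊) :
    ∃ y : ℕ → 𝕊, (∀ N, y N ∈ DptsAll) ∧ Tendsto (fun N => dOf Δ x (y N)) atTop (𝓝 0) := by
  let j : ℕ → ℕ := fun N => ⌊circRep x * 2 ^ N⌋₊
  have hpos : ∀ k i, i < 2 ^ k → 0 ≤ Δ k i := fun k i hi => (hΔ.2.1 k i hi).le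
  have hmesh : Tendsto (fun N => Δ N (j N)) atTop (𝓝 0) := by
    refine Metric.tendsto_atTop.2 fun ε hε => ?_
    obtain ⟨N₀, hN₀⟩ := hΔ.2.2.2 ε hε
    refine ⟨N₀, fun N hN => ?_⟩
    have hj := (mem_dyadicArc_floor N x).1
    rw [Real.dist_eq, sub_zero, abs_of_pos (hΔ.2.1 N _ hj)]
    exact hN₀ N hN _ hj
  refine ⟨fun N => leftPt N (j N), fun N => mem_iUnion.2 ⟨N, j N, rfl⟩,
    squeeze_zero (fun N => dOf_nonneg hpos _ _) (fun N => ?_) hmesh⟩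
  obtain ⟨hj, hx, hleft⟩ := mem_dyadicArc_floor N x
  exact dOf_le_of_mem_dyadicArc hpos hj hx hleft

end LimitMap

section FoldMap

variable (Δ : ℕ → ℕ → ℝ) (n : ℕ)

lemma continuous_foldPhi : Continuous foldPhi := by
  refine Continuous.if_le (by fun_prop) (Continuous.if_le (by fun_prop) (by fun_prop)
    continuous_id continuous_const fun t ht => ?_) continuous_id continuous_const fun t ht => ?_
  all_goals rw [ht]; norm_num

/-- `f_n` on the arc `[z, z + 1] / 2ⁿ`, rescaled by `2ⁿ`, as a function of the position
`s ∈ [0, 1]` in that arc. -/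
def foldPiece (z : ℤ) (s : ℝ) : ℝ :=
  z + if Δ (n + 1) (2 * z.toNat) = Δ n z.toNat then foldPhi s else s

lemma foldPiece_zero (z : ℤ) : foldPiece Δ n z 0 = z := by
  unfold foldPiece; split_ifs <;> norm_num [foldPhi]

lemma foldPiece_one (z : ℤ) : foldPiece Δ n z 1 = z + 1 := by
  unfold foldPiece; split_ifs <;> norm_num [foldPhi]

lemma continuous_foldPiece_floor_fract :
    Continuous fun v => foldPiece Δ n ⌊v⌋ (Int.fract v) := by
  refine continuous_floor_fract (fun z => Continuous.continuousOn ?_) fun z => ?_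
  · unfold foldPiece
    split_ifs
    exacts [continuous_const.add continuous_foldPhi, continuous_const.add continuous_id]
  · rw [foldPiece_one, foldPiece_zero, Int.cast_add, Int.cast_one]

lemma foldMap_coe (t : ℝ) :
    foldMap Δ n t =
      ((foldPiece Δ n ⌊Int.fract t * 2 ^ n⌋ (Int.fract (Int.fract t * 2 ^ n)) / 2 ^ n : ℝ) :
        𝕊) := by
  have hv : 0 ≤ Int.fract t * 2 ^ n := by positivity
  have hfloor : ⌊Int.fract t * 2 ^ n⌋ = (⌊Int.fract t * 2 ^ n⌋₊ : ℤ) :=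
    (Int.natCast_floor_eq_floor hv).symm
  have hfract :
      Int.fract (Int.fract t * 2 ^ n) = Int.fract t * 2 ^ n - ⌊Int.fract t * 2 ^ n⌋₊ := by
    rw [← Int.self_sub_floor, hfloor, Int.cast_natCast]
  simp only [foldMap, circRep_coe, foldPiece, hfloor, hfract, Int.toNat_natCast, Int.cast_natCast]
  split_ifs
  · rfl
  · rw [add_sub_cancel, mul_div_cancel_right₀ _ (by positivity), ← circRep_coe, coe_circRep]

lemma continuous_foldMap : Continuous (foldMap Δ n) := by
  refine isQuotientMap_quotient_mk'.continuous_iff.2 ?_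
  let g : ℝ → 𝕊 := fun s =>
    ((foldPiece Δ n ⌊s * 2 ^ n⌋ (Int.fract (s * 2 ^ n)) / 2 ^ n : ℝ) : 𝕊)
  have hg : Continuous g := (AddCircle.continuous_mk' 1).comp
    (((continuous_foldPiece_floor_fract Δ n).comp (by fun_prop)).div_const _)
  have hg01 : g 0 = g 1 := by
    have h2n : ((2 : ℝ) ^ n) = ((2 ^ n : ℕ) : ℤ) := by push_cast; rfl
    simp only [g, zero_mul, Int.floor_zero, Int.fract_zero, foldPiece_zero, one_mul]
    rw [h2n, Int.floor_intCast, Int.fract_intCast, foldPiece_zero, ← h2n,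
      div_self (by positivity), Int.cast_zero, zero_div, AddCircle.coe_period,
      QuotientAddGroup.mk_zero]
  exact (hg.continuousOn.comp_fract'' hg01).congr fun t => (foldMap_coe Δ n t).symm

end FoldMap

section Fchain

variable (Δ : ℕ → ℕ → ℝ)

lemma continuous_Fchain (m n : ℕ) : Continuous (Fchain Δ m n) := by
  induction n with
  | zero =>
    unfold Fchain
    split_ifs
    exacts [continuous_foldMap Δ 0, continuous_id]
  | succ n ih =>
    unfold Fchain
    split_ifs
    exacts [ih.comp (continuous_foldMap Δ _), continuous_foldMap Δ _, continuous_id]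

lemma Fchain_eq_comp {m n : ℕ} (hmn : m ≤ n) {n' : ℕ} (hn' : n < n') :
    Fchain Δ m n' = Fchain Δ m n ∘ Fchain Δ (n + 1) n' := by
  induction n' with
  | zero => omega
  | succ n' ih =>
    rcases (Nat.lt_succ_iff.1 hn').eq_or_lt with rfl | hlt
    · rw [Fchain, if_pos hmn, Fchain, if_neg (by omega), if_pos rfl]
    · rw [Fchain, if_pos (by omega), ih hlt, Fchain, if_pos (show n + 1 ≤ n' from hlt),
        Function.comp_assoc]

variable {Δ}

lemma IsLimitMap.Fchain_comp_of_mem_DptsAll {m n : ℕ} (hmn : m ≤ n) {Fm Fn1 : 𝕊 → 𝕊}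
    (hFm : IsLimitMap Δ m Fm) (hFn1 : IsLimitMap Δ (n + 1) Fn1) {y : 𝕊} (hy : y ∈ DptsAll) :
    Fchain Δ m n (Fn1 y) = Fm y := by
  obtain ⟨N₁, h₁⟩ := hFn1.2 y hy
  obtain ⟨N₂, h₂⟩ := hFm.2 y hy
  obtain ⟨n', hN₁, hN₂, hn'⟩ : ∃ n', N₁ ≤ n' ∧ N₂ ≤ n' ∧ n < n' :=
    ⟨max (max N₁ N₂) (n + 1), by omega, by omega, by omega⟩
  rw [← h₁ n' hN₁, ← h₂ n' hN₂]
  exact (congrFun (Fchain_eq_comp Δ hmn hn') y).symm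

end Fchain

/-- For all `m ≤ n` and every `x ∈ 𝕊`, `F_{m,n}(F_{n+1}(x)) = F_m(x)`. -/
theorem Fchain_comp_limitMap (Δ : ℕ → ℕ → ℝ) (hΔ : IsS1 Δ) (m n : ℕ) (hmn : m ≤ n)
    (Fm Fn1 : AddCircle (1 : ℝ) → AddCircle (1 : ℝ))
    (hFm : IsLimitMap Δ m Fm) (hFn1 : IsLimitMap Δ (n + 1) Fn1)
    (x : AddCircle (1 : ℝ)) :
    Fchain Δ m n (Fn1 x) = Fm x := by
  obtain ⟨y, hyD, hy⟩ := exists_seq_mem_DptsAll_tendsto_dOf hΔ x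
  have hlhs : Tendsto (fun N => Fchain Δ m n (Fn1 (y N))) atTop (𝓝 (Fchain Δ m n (Fn1 x))) :=
    ((continuous_Fchain Δ m n).tendsto _).comp (hFn1.tendsto_comp hΔ hy)
  have hdyadic : ∀ N, Fchain Δ m n (Fn1 (y N)) = Fm (y N) := fun N =>
    hFm.Fchain_comp_of_mem_DptsAll hmn hFn1 (hyD N)
  simp only [hdyadic] at hlhs
  exact tendsto_nhds_unique hlhs (hFm.tendsto_comp hΔ hy)
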